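/- arXiv:1805.08181 — 2 statements merged into one kernel-verified Lean document; each statement's English description precedes it below -/
import Mathlib

section
/- Let K be a field and let M be a connected d×n matrix over K with columns x₁, …, xₙ ∈ K^d. If g is an invertible d×d matrix over K such that every xᵢ is an eigenvector of g (for each i there exists cᵢ ∈ K with g·xᵢ = cᵢ·xᵢ), then g is a scalar multiple of the identity matrix. -/
/-! Let `c` be the eigenvalue of some column and split the columns into those with eigenvalue `c`
and the others. The first span lies in the `c`-eigenspace, the second in the sum of the other
eigenspaces; eigenspaces are independent and the columns span `K^d`, so the two spans are
complementary and their ranks add up to `d`. Connectedness forbids this unless every column has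
eigenvalue `c`, and then `g = c • 1` on a spanning set. -/

noncomputable section

/-- The rank of the submatrix of `M` formed by the columns indexed by `A`. -/
def colRank {K : Type*} [Field K] {d n : ℕ} (M : Matrix (Fin d) (Fin n) K)
    (A : Finset (Fin n)) : ℕ :=
  (M.submatrix id ((↑) : A → Fin n)).rank

/-- A `d × n` matrix is connected if it has rank `d` and there is no proper nonempty
subset `A` of the columns with `rk(A) + rk(Aᶜ) = d`. -/
def IsConnectedMatrix {K : Type*} [Field K] {d n : ℕ}
    (M : Matrix (Fin d) (Fin n) K) : Prop :=
  colRank M Finset.univ = d ∧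
    ¬∃ A : Finset (Fin n), A ≠ ∅ ∧ A ≠ Finset.univ ∧ colRank M A + colRank M Aᶜ = d

open Module Submodule

namespace Module.End

variable {K V ι : Type*} [Field K] [AddCommGroup V] [Module K V] {f : End K V} {v : ι → V}

lemma disjoint_span_eigenvectors (hv : ∀ i, ∃ c : K, f (v i) = c • v i) (c : K) :
    Disjoint (span K (v '' {i | f (v i) = c • v i}))
      (span K (v '' {i | f (v i) = c • v i}ᶜ)) := by
  refine Disjoint.mono (b := f.eigenspace c) (d := ⨆ μ ∈ {μ | μ ≠ c}, f.eigenspace μ) ?_ ?_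
    ((eigenspaces_iSupIndep f).disjoint_biSup (by simp))
  · rw [span_le]
    rintro _ ⟨i, hi, rfl⟩
    exact mem_eigenspace_iff.mpr hi
  · rw [span_le]
    rintro _ ⟨i, hi, rfl⟩
    obtain ⟨μ, hμ⟩ := hv i
    have hμc : μ ≠ c := by
      rintro rfl
      exact hi hμ
    exact mem_iSup_of_mem μ (mem_iSup_of_mem hμc (mem_eigenspace_iff.mpr hμ))

lemma isCompl_span_eigenvectors (hspan : span K (Set.range v) = ⊤)
    (hv : ∀ i, ∃ c : K, f (v i) = c • v i) (c : K) :
    IsCompl (span K (v '' {i | f (v i) = c • v i}))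
      (span K (v '' {i | f (v i) = c • v i}ᶜ)) := by
  refine ⟨disjoint_span_eigenvectors hv c, codisjoint_iff.mpr ?_⟩
  rw [← span_union, ← Set.image_union, Set.union_compl_self, Set.image_univ, hspan]

theorem exists_eq_smul_one_of_forall_eigenvector [FiniteDimensional K V] [Fintype ι]
    [DecidableEq ι]
    (hspan : span K (Set.range v) = ⊤)
    (hsplit : ∀ s : Finset ι, s ≠ ∅ → s ≠ Finset.univ →
      finrank K (span K (v '' s)) + finrank K (span K (v '' ↑sᶜ)) ≠ finrank K V)
    (hv : ∀ i, ∃ c : K, f (v i) = c • v i) :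
    ∃ c : K, f = c • 1 := by
  classical
  by_contra! hf
  have hnot : ∀ c : K, ∃ i, f (v i) ≠ c • v i := by
    intro c
    by_contra! h
    exact hf c (LinearMap.ext_on_range hspan (by simpa using h))
  -- `hnot 0` only serves to produce an index, so that `ι = ∅` needs no separate case
  obtain ⟨i₀, -⟩ := hnot 0
  obtain ⟨c, hc⟩ := hv i₀
  refine hsplit {i | f (v i) = c • v i} ?_ ?_ ?_
  · exact Finset.ne_empty_of_mem (Finset.mem_filter.mpr ⟨Finset.mem_univ _, hc⟩)
  · obtain ⟨i, hi⟩ := hnot c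
    exact fun h => hi (by simpa using Finset.ext_iff.mp h i)
  · convert finrank_add_eq_of_isCompl (isCompl_span_eigenvectors hspan hv c) using 5 <;>
      simp [Set.compl_ofPred]

end Module.End

lemma colRank_eq_finrank_span {K : Type*} [Field K] {d n : ℕ}
    (M : Matrix (Fin d) (Fin n) K) (A : Finset (Fin n)) :
    colRank M A = finrank K (span K (M.col '' A)) := by
  rw [colRank, Matrix.rank_eq_finrank_span_cols]
  have : Set.range (M.submatrix id ((↑) : A → Fin n)).col = M.col '' A := by
    ext v
    exact ⟨fun ⟨a, ha⟩ => ⟨a, a.2, ha⟩, fun ⟨i, hi, hv⟩ => ⟨⟨i, hi⟩, hv⟩⟩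
  rw [this]

namespace IsConnectedMatrix

variable {K : Type*} [Field K] {d n : ℕ} {M : Matrix (Fin d) (Fin n) K}

lemma span_col_eq_top (hM : IsConnectedMatrix M) : span K (Set.range M.col) = ⊤ := by
  apply eq_top_of_finrank_eq
  rw [← Set.image_univ, ← Finset.coe_univ, ← colRank_eq_finrank_span, hM.1, finrank_fin_fun]

lemma finrank_span_add_ne (hM : IsConnectedMatrix M) (A : Finset (Fin n)) (hA : A ≠ ∅)
    (hA' : A ≠ Finset.univ) :
    finrank K (span K (M.col '' A)) + finrank K (span K (M.col '' ↑Aᶜ)) ≠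
      finrank K (Fin d → K) := by
  rw [← colRank_eq_finrank_span, ← colRank_eq_finrank_span, finrank_fin_fun]
  exact fun h => hM.2 ⟨A, hA, hA', h⟩

end IsConnectedMatrix

theorem scalar_of_columns_eigenvectors_general {K : Type*} [Field K] {d n : ℕ}
    (M : Matrix (Fin d) (Fin n) K) (hM : IsConnectedMatrix M)
    (g : Matrix (Fin d) (Fin d) K)
    (heig : ∀ i : Fin n, ∃ c : K,
      g.mulVec (fun j => M j i) = c • (fun j => M j i)) :
    ∃ c : K, g = c • (1 : Matrix (Fin d) (Fin d) K) := by
  obtain ⟨c, hc⟩ := Module.End.exists_eq_smul_one_of_forall_eigenvector (f := g.mulVecLin)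
    hM.span_col_eq_top hM.finrank_span_add_ne heig
  refine ⟨c, Matrix.toLin'.injective ?_⟩
  rw [map_smul, Matrix.toLin'_one]
  exact hc

/-- If every column of a connected matrix `M` is an eigenvector of an invertible matrix `g`,
then `g` is a scalar multiple of the identity. -/
theorem scalar_of_columns_eigenvectors {K : Type*} [Field K] {d n : ℕ}
    (M : Matrix (Fin d) (Fin n) K) (hM : IsConnectedMatrix M)
    (g : Matrix (Fin d) (Fin d) K) (hg : IsUnit g)
    (heig : ∀ i : Fin n, ∃ c : K,
      g.mulVec (fun j => M j i) = c • (fun j => M j i)) :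
    ∃ c : K, g = c • (1 : Matrix (Fin d) (Fin d) K) :=
  scalar_of_columns_eigenvectors_general M hM g heig
end
end

section
/- Let K be a field, let M₁, …, M_m be d×n matrices over K, each of rank d, and let a₁, …, a_m be integers such that the support of the function ∑_{j=1}^m aⱼ·1_{P_{Mⱼ}} has empty interior in the hyperplane {x ∈ ℝⁿ : x₁+⋯+xₙ = d} (with its subspace topology). Then for every integer r ≥ 0 and every e = (e₁,…,eₙ) ∈ ℤⁿ, one has ∑_{j=1}^m aⱼ·χⱼ(e) = 0, where χⱼ(e) = 1 if both ∑_{i∈A} eᵢ < (r+1)·rk_{Mⱼ}(A) for every nonempty A ⊆ {1,…,n} and ∑_{i=1}^n eᵢ = (r+1)d − 1 hold, and χⱼ(e) = 0 otherwise. -/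
/-!
Only `e` with `∑ eᵢ = c d - 1`, where `c = r + 1`, matter. For such `e`, the point
`x = (e + 1/n) / c` lies on the hyperplane `∑ xᵢ = d` and satisfies
`∑_{i∈A} xᵢ = (∑_{i∈A} eᵢ + |A|/n) / c` with `0 < |A|/n < 1` for nonempty proper `A`.
Since the `eᵢ` are integers, every constraint `∑_{i∈A} eᵢ < c·rk(A)` that holds becomes strict
at `x`, and every one that fails is violated strictly at `x`. Hence, near `x` on the hyperplane,
`1_{P_{Mⱼ}}` is constant with value `χⱼ(e)`, so `∑ aⱼ 1_{P_{Mⱼ}}` is constant with value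
`∑ aⱼ χⱼ(e)`. Because its support has empty interior, that value is `0`.
-/

open scoped Classical

noncomputable section

/-- The rank polytope `P_M ⊆ ℝⁿ` of a `d × n` matrix `M`. -/
def rankPolytope {K : Type*} [Field K] {d n : ℕ} (M : Matrix (Fin d) (Fin n) K) :
    Set (Fin n → ℝ) :=
  {x | (∀ i, 0 ≤ x i ∧ x i ≤ 1) ∧ (∑ i, x i = d) ∧
    ∀ A : Finset (Fin n), ∑ i ∈ A, x i ≤ colRank M A}

open Finset Filter Topology

section RankPolytope

variable {K : Type*} [Field K] {d n : ℕ} (M : Matrix (Fin d) (Fin n) K)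

theorem colRank_univ : colRank M univ = M.rank :=
  M.rank_submatrix (Equiv.refl _) (Equiv.subtypeUnivEquiv mem_univ)

theorem colRank_le_card (A : Finset (Fin n)) : colRank M A ≤ #A := by
  simpa [colRank] using (M.submatrix id ((↑) : A → Fin n)).rank_le_card_width

theorem colRank_le_height (A : Finset (Fin n)) : colRank M A ≤ d := by
  simpa [colRank] using (M.submatrix id ((↑) : A → Fin n)).rank_le_card_height

theorem mem_rankPolytope_of_forall_le {y : Fin n → ℝ} (hy : ∑ i, y i = d)
    (hA : ∀ A : Finset (Fin n), ∑ i ∈ A, y i ≤ (colRank M A : ℝ)) : y ∈ rankPolytope M := by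
  refine ⟨fun i => ⟨?_, ?_⟩, hy, hA⟩
  · have hcompl : (colRank M {i}ᶜ : ℝ) ≤ d := by exact_mod_cast colRank_le_height M {i}ᶜ
    have hsplit := sum_compl_add_sum {i} y
    rw [sum_singleton, hy] at hsplit
    linarith [hA {i}ᶜ]
  · have hsingle : (colRank M {i} : ℝ) ≤ 1 := by exact_mod_cast colRank_le_card M {i}
    linarith [sum_singleton y i ▸ hA {i}]

theorem mem_rankPolytope_of_forall_lt (hM : M.rank = d) {y : Fin n → ℝ} (hy : ∑ i, y i = d)
    (hA : ∀ A : Finset (Fin n), A.Nonempty → A ≠ univ → ∑ i ∈ A, y i < (colRank M A : ℝ)) :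
    y ∈ rankPolytope M := by
  refine mem_rankPolytope_of_forall_le M hy fun A => ?_
  rcases A.eq_empty_or_nonempty with rfl | hne
  · simp
  rcases eq_or_ne A univ with rfl | hu
  · rw [hy, colRank_univ, hM]
  · exact (hA A hne hu).le

theorem eventually_mem_rankPolytope (hM : M.rank = d) {x : Fin n → ℝ}
    (hx : ∀ A : Finset (Fin n), A.Nonempty → A ≠ univ → ∑ i ∈ A, x i < (colRank M A : ℝ)) :
    ∀ᶠ y in 𝓝 x, ∑ i, y i = (d : ℝ) → y ∈ rankPolytope M := by
  have hstrict : ∀ᶠ y in 𝓝 x, ∀ A : Finset (Fin n), A.Nonempty → A ≠ univ →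
      ∑ i ∈ A, y i < (colRank M A : ℝ) := by
    refine eventually_all.2 fun A => ?_
    by_cases hA : A.Nonempty ∧ A ≠ univ
    · have hcont : Continuous fun y : Fin n → ℝ => ∑ i ∈ A, y i := by fun_prop
      filter_upwards [hcont.continuousAt.eventually_lt continuousAt_const (hx A hA.1 hA.2)]
        with y hy _ _ using hy
    · exact Eventually.of_forall fun y h₁ h₂ => absurd ⟨h₁, h₂⟩ hA
  filter_upwards [hstrict] with y hy hsum using mem_rankPolytope_of_forall_lt M hM hsum hy

theorem eventually_notMem_rankPolytope {x : Fin n → ℝ} {A : Finset (Fin n)}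
    (hx : (colRank M A : ℝ) < ∑ i ∈ A, x i) : ∀ᶠ y in 𝓝 x, y ∉ rankPolytope M := by
  have hcont : Continuous fun y : Fin n → ℝ => ∑ i ∈ A, y i := by fun_prop
  filter_upwards [continuousAt_const.eventually_lt hcont.continuousAt hx] with y hy hmem
  exact (hmem.2.2 A).not_gt hy

end RankPolytope

section ScaledShift

variable {n : ℕ}

def scaledShift (c : ℤ) (e : Fin n → ℤ) : Fin n → ℝ :=
  fun i => (e i + (n : ℝ)⁻¹) / c

theorem sum_scaledShift (c : ℤ) (e : Fin n → ℤ) (A : Finset (Fin n)) :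
    ∑ i ∈ A, scaledShift c e i = ((∑ i ∈ A, e i : ℤ) + #A / n) / c := by
  simp only [scaledShift]
  rw [← sum_div, sum_add_distrib, sum_const, nsmul_eq_mul, ← div_eq_mul_inv, Int.cast_sum]

variable {c : ℤ} (e : Fin n → ℤ)

theorem sum_scaledShift_univ (hc : 0 < c) (hn : 0 < n) {d : ℕ} (he : ∑ i, e i = c * d - 1) :
    ∑ i, scaledShift c e i = d := by
  have hc' : (c : ℝ) ≠ 0 := by exact_mod_cast hc.ne'
  rw [sum_scaledShift, he, card_univ, Fintype.card_fin, div_self (by exact_mod_cast hn.ne')]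
  push_cast
  field_simp
  ring

theorem sum_scaledShift_lt (hc : 0 < c) {A : Finset (Fin n)} (hA : A ≠ univ) {t : ℤ}
    (h : ∑ i ∈ A, e i < c * t) : ∑ i ∈ A, scaledShift c e i < t := by
  have hcard : (#A : ℝ) / n < 1 := by
    have hlt : #A < n := by simpa using card_lt_card ((subset_univ A).ssubset_of_ne hA)
    have hn : (0 : ℝ) < n := by exact_mod_cast (Nat.zero_le _).trans_lt hlt
    rw [div_lt_one hn]
    exact_mod_cast hlt
  have hint : ((∑ i ∈ A, e i : ℤ) : ℝ) ≤ c * t - 1 := by exact_mod_cast Int.le_sub_one_of_lt h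
  rw [sum_scaledShift, div_lt_iff₀ (by exact_mod_cast hc)]
  linarith

theorem lt_sum_scaledShift (hc : 0 < c) {A : Finset (Fin n)} (hA : A.Nonempty) {t : ℤ}
    (h : c * t ≤ ∑ i ∈ A, e i) : (t : ℝ) < ∑ i ∈ A, scaledShift c e i := by
  have hcard : 0 < (#A : ℝ) / n := by
    have hn : 0 < n := Fin.pos_iff_nonempty.2 ⟨hA.choose⟩
    exact div_pos (by exact_mod_cast hA.card_pos) (by exact_mod_cast hn)
  have hint : (c * t : ℝ) ≤ ((∑ i ∈ A, e i : ℤ) : ℝ) := by exact_mod_cast h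
  rw [sum_scaledShift, lt_div_iff₀ (by exact_mod_cast hc)]
  linarith

end ScaledShift

theorem eventually_indicator_rankPolytope_eq {K : Type*} [Field K] {d n : ℕ}
    (M : Matrix (Fin d) (Fin n) K) (hM : M.rank = d) {c : ℤ} (hc : 0 < c) (e : Fin n → ℤ) :
    ∀ᶠ y in 𝓝 (scaledShift c e), ∑ i, y i = (d : ℝ) →
      (rankPolytope M).indicator (fun _ => (1 : ℤ)) y =
        if ∀ A : Finset (Fin n), A.Nonempty → ∑ i ∈ A, e i < c * colRank M A then 1 else 0 := by
  by_cases hχ : ∀ A : Finset (Fin n), A.Nonempty → ∑ i ∈ A, e i < c * colRank M A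
  · have hx := fun A hA hu => by exact_mod_cast sum_scaledShift_lt e hc hu (hχ A hA)
    filter_upwards [eventually_mem_rankPolytope M hM hx] with y hy hsum
    rw [if_pos hχ, Set.indicator_of_mem (hy hsum)]
  · obtain ⟨A, hA, hle⟩ : ∃ A : Finset (Fin n), A.Nonempty ∧ c * colRank M A ≤ ∑ i ∈ A, e i := by
      simpa using hχ
    have hx : (colRank M A : ℝ) < ∑ i ∈ A, scaledShift c e i := by
      exact_mod_cast lt_sum_scaledShift e hc hA hle
    filter_upwards [eventually_notMem_rankPolytope M hx] with y hy _
    rw [if_neg hχ, Set.indicator_of_notMem hy]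

/-- If `∑ aⱼ 1_{P_{Mⱼ}}` is supported on a set of empty interior in the hyperplane
`{∑ xᵢ = d}`, then for every `r` and every integer vector `e`, the signed count of those
`j` for which `∑_{i∈A} eᵢ < (r+1)·rk_{Mⱼ}(A)` for all nonempty `A` and
`∑ eᵢ = (r+1)d − 1` vanishes. -/
theorem lattice_point_additivity {K : Type*} [Field K] {d n m : ℕ}
    (M : Fin m → Matrix (Fin d) (Fin n) K) (hM : ∀ j, (M j).rank = d)
    (a : Fin m → ℤ)
    (hsupp : interior {x : {y : Fin n → ℝ // ∑ i, y i = d} |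
      (∑ j, a j * (rankPolytope (M j)).indicator (fun _ => (1 : ℤ)) (x : Fin n → ℝ))
        ≠ 0} = ∅) :
    ∀ (r : ℕ) (e : Fin n → ℤ),
      ∑ j, a j *
        (if (∀ A : Finset (Fin n), A.Nonempty →
              (∑ i ∈ A, e i) < ((r : ℤ) + 1) * (colRank (M j) A : ℤ)) ∧
            (∑ i, e i) = ((r : ℤ) + 1) * (d : ℤ) - 1
          then (1 : ℤ) else 0) = 0 := by
  intro r e
  by_cases he : ∑ i, e i = ((r : ℤ) + 1) * d - 1
  swap
  · simp [he]
  simp only [he, and_true]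
  rcases isEmpty_or_nonempty (Fin m) with _ | ⟨⟨j₀⟩⟩
  · simp
  have hc : (0 : ℤ) < r + 1 := by positivity
  have hn : 0 < n := Nat.pos_of_ne_zero fun hn0 => by
    have hd : d ≤ n := hM j₀ ▸ (M j₀).rank_le_width
    obtain rfl : d = 0 := by omega
    subst hn0
    simp at he
  set x : {y : Fin n → ℝ // ∑ i, y i = d} := ⟨_, sum_scaledShift_univ e hc hn he⟩
  have hlocal := (continuous_subtype_val.tendsto x).eventually <| eventually_all.2 fun j =>
    eventually_indicator_rankPolytope_eq (M j) (hM j) hc e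
  by_contra hne
  refine Set.eq_empty_iff_forall_notMem.1 hsupp x (mem_interior_iff_mem_nhds.2 ?_)
  filter_upwards [hlocal] with z hz
  simpa only [Set.mem_ofPred_eq, fun j => hz j z.2] using hne
end
end
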